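/- arXiv:hep-th/9901166 — 4 statements merged into one kernel-verified Lean document; each statement's English description precedes it below -/
import Mathlib

section
/- Let F_1,…,F_n be symmetric invertible real n×n matrices and let G = Σᵢ cᵢ Fᵢ be an invertible linear combination. If Fᵢ G⁻¹ Fⱼ = Fⱼ G⁻¹ Fᵢ for all i, j, then Fᵢ Fₖ⁻¹ Fⱼ = Fⱼ Fₖ⁻¹ Fᵢ for all i, j, k (the generalized WDVV equations). -/
open Matrix

theorem wdvv_from_G_form (n : ℕ) (F : Fin n → Matrix (Fin n) (Fin n) ℝ)
    (hFsymm : ∀ i, (F i)ᵀ = F i)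
    (hFinv : ∀ i, IsUnit (F i))
    (c : Fin n → ℝ)
    (hGinv : IsUnit (∑ i, c i • F i))
    (hG : ∀ i j, F i * (∑ i, c i • F i)⁻¹ * F j = F j * (∑ i, c i • F i)⁻¹ * F i) :
    ∀ i j k, F i * (F k)⁻¹ * F j = F j * (F k)⁻¹ * F i := by
  intro i j k
  set G : Matrix (Fin n) (Fin n) ℝ := ∑ i, c i • F i with hGdef
  set A : Fin n → Matrix (Fin n) (Fin n) ℝ := fun i => G⁻¹ * F i with hAdef
  have hGinv' : IsUnit G⁻¹ := Matrix.isUnit_nonsing_inv_iff.mpr hGinv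
  have hA : ∀ i, IsUnit (A i) := fun i => hGinv'.mul (hFinv i)
  have hcomm : ∀ i j, A i * A j = A j * A i := by
    intro i j
    have h := hG i j
    calc A i * A j = G⁻¹ * (F i * G⁻¹ * F j) := by
          simp only [hAdef, Matrix.mul_assoc]
      _ = G⁻¹ * (F j * G⁻¹ * F i) := by rw [h]
      _ = A j * A i := by simp only [hAdef, Matrix.mul_assoc]
  have hcommInv : ∀ i k, A i * (A k)⁻¹ = (A k)⁻¹ * A i := by
    intro i k
    have h1 : (A k)⁻¹ * (A i * A k) * (A k)⁻¹ = (A k)⁻¹ * (A k * A i) * (A k)⁻¹ := by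
      rw [hcomm i k]
    calc A i * (A k)⁻¹
        = (A k)⁻¹ * (A k * A i) * (A k)⁻¹ := by
          rw [← Matrix.mul_assoc, ← Matrix.mul_assoc,
            Matrix.nonsing_inv_mul _ ((Matrix.isUnit_iff_isUnit_det _).mp (hA k)),
            Matrix.one_mul]
      _ = (A k)⁻¹ * (A i * A k) * (A k)⁻¹ := h1.symm
      _ = (A k)⁻¹ * A i := by
          rw [Matrix.mul_assoc, Matrix.mul_assoc,
            Matrix.mul_nonsing_inv _ ((Matrix.isUnit_iff_isUnit_det _).mp (hA k)),
            Matrix.mul_one]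
  have hF : ∀ i, F i = G * A i := by
    intro i
    rw [hAdef, ← Matrix.mul_assoc,
      Matrix.mul_nonsing_inv _ ((Matrix.isUnit_iff_isUnit_det _).mp hGinv), Matrix.one_mul]
  have hFkinv : (F k)⁻¹ = (A k)⁻¹ * G⁻¹ := by
    rw [hF k, Matrix.mul_inv_rev]
  have hdG := (Matrix.isUnit_iff_isUnit_det G).mp hGinv
  have key : A i * (A k)⁻¹ * A j = A j * (A k)⁻¹ * A i := by
    rw [hcommInv i k, Matrix.mul_assoc, hcomm i j, ← Matrix.mul_assoc, ← hcommInv j k]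
  calc F i * (F k)⁻¹ * F j
      = G * (A i * (A k)⁻¹ * A j) := by
        rw [hF i, hF j, hFkinv]
        simp only [Matrix.mul_assoc, Matrix.nonsing_inv_mul_cancel_left _ _ hdG]
    _ = G * (A j * (A k)⁻¹ * A i) := by rw [key]
    _ = F j * (F k)⁻¹ * F i := by
        rw [hF i, hF j, hFkinv]
        simp only [Matrix.mul_assoc, Matrix.nonsing_inv_mul_cancel_left _ _ hdG]
end

section
/- Let F_1,…,F_n be invertible real n×n matrices satisfying the WDVV equations Fᵢ Fₖ⁻¹ Fⱼ = Fⱼ Fₖ⁻¹ Fᵢ for all i, j, k, and let G = Σᵢ cᵢ Fᵢ be an invertible linear combination. Then Fᵢ G⁻¹ Fⱼ = Fⱼ G⁻¹ Fᵢ for all i, j. -/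
theorem G_form_from_wdvv (n : ℕ) (F : Fin n → Matrix (Fin n) (Fin n) ℝ)
    (hFinv : ∀ i, IsUnit (F i))
    (hWDVV : ∀ i j k, F i * (F k)⁻¹ * F j = F j * (F k)⁻¹ * F i)
    (c : Fin n → ℝ)
    (hGinv : IsUnit (∑ i, c i • F i)) :
    ∀ i j, F i * (∑ i, c i • F i)⁻¹ * F j = F j * (∑ i, c i • F i)⁻¹ * F i := by
  intro i j
  set G : Matrix (Fin n) (Fin n) ℝ := ∑ i, c i • F i with hG
  have hdet : ∀ k, IsUnit (F k).det := fun k =>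
    (Matrix.isUnit_iff_isUnit_det (F k)).mp (hFinv k)
  have hdetG : IsUnit G.det := (Matrix.isUnit_iff_isUnit_det G).mp hGinv
  have hdetFi := hdet i
  have hdetFj := hdet j
  -- inverted WDVV
  have h1 : ∀ k, (F j)⁻¹ * F k * (F i)⁻¹ = (F i)⁻¹ * F k * (F j)⁻¹ := by
    intro k
    have := congrArg (·⁻¹) (hWDVV i j k)
    simpa [Matrix.mul_inv_rev, Matrix.nonsing_inv_nonsing_inv _ (hdet k),
      mul_assoc] using this
  -- sum
  have h2 : (F j)⁻¹ * G * (F i)⁻¹ = (F i)⁻¹ * G * (F j)⁻¹ := by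
    rw [hG, Finset.mul_sum, Finset.mul_sum, Finset.sum_mul, Finset.sum_mul]
    refine Finset.sum_congr rfl fun k _ => ?_
    rw [Matrix.mul_smul, Matrix.smul_mul, Matrix.mul_smul, Matrix.smul_mul, h1 k]
  -- invert back
  have h3 := congrArg (·⁻¹) h2
  simpa [Matrix.mul_inv_rev, Matrix.nonsing_inv_nonsing_inv _ hdetFi,
    Matrix.nonsing_inv_nonsing_inv _ hdetFj, mul_assoc] using h3
end

section
/- Let V be a real inner product space, α, β ∈ V with ⟪α,α⟫ = ⟪β,β⟫ = 2 and ⟪α,β⟫ = -1, and let a ∈ V satisfy ⟪α,a⟫ ≠ 0, ⟪β,a⟫ ≠ 0, ⟪α+β,a⟫ ≠ 0. For fixed u, v, p, q ∈ V define t(γ,δ) = ⟪γ,δ⟫·(⟪γ,u⟫⟪δ,v⟫ − ⟪γ,v⟫⟪δ,u⟫)·(⟪γ,p⟫⟪δ,q⟫ − ⟪γ,q⟫⟪δ,p⟫)/(⟪γ,a⟫⟪δ,a⟫). Then t(α,β) + t(α, α+β) + t(β, α+β) = 0. -/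
open RealInnerProductSpace

theorem triple_cancellation_simply_laced (V : Type*) [NormedAddCommGroup V]
    [InnerProductSpace ℝ V] (α β a u v p q : V)
    (hα : ⟪α, α⟫ = (2 : ℝ)) (hβ : ⟪β, β⟫ = (2 : ℝ)) (hαβ : ⟪α, β⟫ = (-1 : ℝ))
    (ha1 : ⟪α, a⟫ ≠ (0 : ℝ)) (ha2 : ⟪β, a⟫ ≠ (0 : ℝ)) (ha3 : ⟪α + β, a⟫ ≠ (0 : ℝ))
    (t : V → V → ℝ)
    (ht : ∀ γ δ, t γ δ = ⟪γ, δ⟫ * (⟪γ, u⟫ * ⟪δ, v⟫ - ⟪γ, v⟫ * ⟪δ, u⟫) *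
      (⟪γ, p⟫ * ⟪δ, q⟫ - ⟪γ, q⟫ * ⟪δ, p⟫) / (⟪γ, a⟫ * ⟪δ, a⟫)) :
    t α β + t α (α + β) + t β (α + β) = 0 := by
  have hβα : ⟪β, α⟫ = (-1 : ℝ) := by rw [real_inner_comm]; exact hαβ
  have hsum : ⟪α + β, a⟫ = ⟪α, a⟫ + ⟪β, a⟫ := inner_add_left α β a
  rw [hsum] at ha3
  rw [ht, ht, ht]
  simp only [inner_add_left, inner_add_right, hα, hβ, hαβ, hβα]
  field_simp
  ring
end

section
/- Let R be a simply-laced crystallographic root system (all roots of squared length 2) with positive system R⁺. The map sending an unordered pair {α, β} ⊂ R⁺ with ⟪α,β⟫ = −1 to the two pairs {α, α+β} and {β, α+β} gives a 2-to-1 correspondence onto unordered pairs {α', β'} ⊂ R⁺ with ⟪α',β'⟫ = 1: every pair {α',β'} of positive roots with ⟪α',β'⟫ = 1 arises as {α, α+β} or {β, α+β} for a unique pair {α,β} ⊂ R⁺ with ⟪α,β⟫ = −1. -/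
open RealInnerProductSpace

theorem two_to_one_correspondence
    (V : Type*) [NormedAddCommGroup V] [InnerProductSpace ℝ V] [FiniteDimensional ℝ V]
    (R : Finset V) (h0 : (0 : V) ∉ R)
    (hlen : ∀ α ∈ R, ⟪α, α⟫ = (2 : ℝ))
    (hcrys : ∀ α ∈ R, ∀ β ∈ R, ∃ k : ℤ, 2 * ⟪α, β⟫ / ⟪β, β⟫ = (k : ℝ))
    (hrefl : ∀ α ∈ R, ∀ β ∈ R, α - (2 * ⟪α, β⟫ / ⟪β, β⟫) • β ∈ R)
    (f : V →ₗ[ℝ] ℝ) (hf : ∀ α ∈ R, f α ≠ 0)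
    (Rp : Finset V) (hRp : ∀ α, α ∈ Rp ↔ α ∈ R ∧ 0 < f α)
    (α' β' : V) (hα' : α' ∈ Rp) (hβ' : β' ∈ Rp) (hip : ⟪α', β'⟫ = (1 : ℝ)) :
    ∃! s : Sym2 V, ∃ α β : V, s = s(α, β) ∧ α ∈ Rp ∧ β ∈ Rp ∧ ⟪α, β⟫ = (-1 : ℝ) ∧
      (s(α', β') = s(α, α + β) ∨ s(α', β') = s(β, α + β)) := by
  have hαR : α' ∈ R := ((hRp α').1 hα').1
  have hβR : β' ∈ R := ((hRp β').1 hβ').1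
  have hfα : 0 < f α' := ((hRp α').1 hα').2
  have hfβ : 0 < f β' := ((hRp β').1 hβ').2
  have h2β : ⟪β', β'⟫ = (2:ℝ) := hlen _ hβR
  have h2α : ⟪α', α'⟫ = (2:ℝ) := hlen _ hαR
  have hγR : α' - β' ∈ R := by
    have h := hrefl α' hαR β' hβR
    rw [hip, h2β] at h
    norm_num at h
    exact h
  have hδR : β' - α' ∈ R := by
    have h := hrefl β' hβR α' hαR
    rw [real_inner_comm α' β', hip, h2α] at h
    norm_num at h
    exact h
  have hipγ : ⟪α' - β', β'⟫ = (-1:ℝ) := by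
    rw [inner_sub_left, hip, h2β]; norm_num
  have hipδ : ⟪β' - α', α'⟫ = (-1:ℝ) := by
    rw [inner_sub_left, real_inner_comm α' β', hip, h2α]; norm_num
  have hfne : f (α' - β') ≠ 0 := hf _ hγR
  rw [map_sub] at hfne
  rcases lt_or_gt_of_ne hfne with hneg | hpos
  · -- f α' < f β' : the pair is {β' - α', α'}
    refine ⟨s(β' - α', α'), ⟨β' - α', α', rfl,
      (hRp _).2 ⟨hδR, by rw [map_sub]; linarith⟩, hα', hipδ,
      Or.inr (by rw [sub_add_cancel])⟩, ?_⟩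
    rintro t ⟨α, β, rfl, hαp, hβp, hipab, hcase | hcase⟩ <;>
      rw [Sym2.eq_iff] at hcase
    · rcases hcase with ⟨h1, h2⟩ | ⟨h1, h2⟩
      · subst h1
        have hb : β = β' - α' := by rw [h2]; abel
        rw [hb]; exact Sym2.eq_swap
      · subst h2
        have hb : β = α' - β' := by rw [h1]; abel
        have := ((hRp β).1 hβp).2
        rw [hb, map_sub] at this; linarith
    · rcases hcase with ⟨h1, h2⟩ | ⟨h1, h2⟩
      · subst h1
        have hb : α = β' - α' := by rw [h2]; abel
        rw [hb]
      · subst h2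
        have hb : α = α' - β' := by rw [h1]; abel
        have := ((hRp α).1 hαp).2
        rw [hb, map_sub] at this; linarith
  · -- f α' > f β' : the pair is {α' - β', β'}
    refine ⟨s(α' - β', β'), ⟨α' - β', β', rfl,
      (hRp _).2 ⟨hγR, by rw [map_sub]; linarith⟩, hβ', hipγ,
      Or.inr (by rw [sub_add_cancel]; exact Sym2.eq_swap)⟩, ?_⟩
    rintro t ⟨α, β, rfl, hαp, hβp, hipab, hcase | hcase⟩ <;>
      rw [Sym2.eq_iff] at hcase
    · rcases hcase with ⟨h1, h2⟩ | ⟨h1, h2⟩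
      · subst h1
        have hb : β = β' - α' := by rw [h2]; abel
        have := ((hRp β).1 hβp).2
        rw [hb, map_sub] at this; linarith
      · subst h2
        have hb : β = α' - β' := by rw [h1]; abel
        rw [hb]; exact Sym2.eq_swap
    · rcases hcase with ⟨h1, h2⟩ | ⟨h1, h2⟩
      · subst h1
        have hb : α = β' - α' := by rw [h2]; abel
        have := ((hRp α).1 hαp).2
        rw [hb, map_sub] at this; linarith
      · subst h2
        have hb : α = α' - β' := by rw [h1]; abel
        rw [hb]
end
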